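/- arXiv:2503.00651 — 2 statements merged into one kernel-verified Lean document; each statement's English description precedes it below -/
import Mathlib

section
/- There exists a positive real constant d₂ such that (2·log(R + √(R²−1))/R) / √(E(R)·|log E(R)|) → d₂ as R → ∞. In particular, the scale-invariant height 2·arcosh(R)/R of the catenoid in the cylinder of radius R behaves like √(E·|log E|), where E = E(R) is the excess. -/
open MeasureTheory Filter

/-- The scale-invariant cylindrical tilt-excess of the 2-dimensional catenoid
`{(x,y,z) : √(x²+y²) = cosh z}` in the cylinder of radius `R`, relative to the
horizontal plane `{z = 0}`. -/
noncomputable def catExcess (R : ℝ) : ℝ :=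
  (4 / (Real.pi * R ^ 2)) *
    ∫ ρ in (1:ℝ)..R, ρ * (2 - 2 * Real.sqrt (ρ ^ 2 - 1) / ρ) * (ρ / Real.sqrt (ρ ^ 2 - 1))

/-! The integrand is the derivative of `arcosh ρ + ρ√(ρ²-1) - ρ²`, so
`πR²E(R)/4 = arcosh R + (R√(R²-1) - R² + 1)`, where the bracket lies in `[0, 1]` and
`arcosh R - log R` lies in `[0, log 2]`. Hence `πR²E/4 ~ arcosh R ~ log R`, so
`-log E = 2 log R - log (πR²E/4) + log (π/4) ~ 2 log R`, and the squared quotient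
`(2 arcosh R / R)² / (E |log E|) = π arcosh² R / ((πR²E/4) |log E|)` tends to `π/2`. -/

open Real Set Asymptotics Topology

theorem Asymptotics.IsEquivalent.of_isBigO_one_sub {α β : Type*} [NormedField β] {l : Filter α}
    {u v : α → β} (huv : (u - v) =O[l] (fun _ ↦ (1 : β)))
    (hv : Tendsto (fun x ↦ ‖v x‖) l atTop) : u ~[l] v :=
  huv.trans_isLittleO (isLittleO_one_left_iff β |>.2 hv)

noncomputable def catExcessDensity (ρ : ℝ) : ℝ :=
  ρ * (2 - 2 * √(ρ ^ 2 - 1) / ρ) * (ρ / √(ρ ^ 2 - 1))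

lemma hasDerivAt_arcosh_add_mul_sqrt_sub_sq {x : ℝ} (hx : 1 < x) :
    HasDerivAt (fun ρ ↦ arcosh ρ + ρ * √(ρ ^ 2 - 1) - ρ ^ 2) (catExcessDensity x) x := by
  have hs : 0 < √(x ^ 2 - 1) := sqrt_pos.2 (by nlinarith)
  have hsq : √(x ^ 2 - 1) ^ 2 = x ^ 2 - 1 := sq_sqrt (by nlinarith)
  have hsqrt : HasDerivAt (fun ρ ↦ √(ρ ^ 2 - 1)) (x / √(x ^ 2 - 1)) x := by
    convert (((hasDerivAt_pow 2 x).sub_const 1).sqrt (by nlinarith)) using 1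
    field_simp
    ring
  refine (((hasDerivAt_arcosh hx).fun_add ((hasDerivAt_id' x).fun_mul hsqrt)).fun_sub
    (hasDerivAt_pow 2 x)).congr_deriv ?_
  rw [catExcessDensity]
  field_simp
  linear_combination hsq

lemma catExcessDensity_nonneg {x : ℝ} (hx : 1 < x) : 0 ≤ catExcessDensity x := by
  have hx0 : 0 < x := by linarith
  have hle : √(x ^ 2 - 1) ≤ x := sqrt_le_iff.2 ⟨hx0.le, by linarith⟩
  have : 2 * √(x ^ 2 - 1) / x ≤ 2 := by rw [div_le_iff₀ hx0]; linarith
  have : 0 ≤ 2 - 2 * √(x ^ 2 - 1) / x := by linarith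
  rw [catExcessDensity]
  positivity

noncomputable def catExcessIntegral (R : ℝ) : ℝ := arcosh R + (R * √(R ^ 2 - 1) - R ^ 2 + 1)

lemma integral_catExcessDensity {R : ℝ} (hR : 1 ≤ R) :
    ∫ ρ in (1 : ℝ)..R, catExcessDensity ρ = catExcessIntegral R := by
  have hcont : ContinuousOn (fun ρ ↦ arcosh ρ + ρ * √(ρ ^ 2 - 1) - ρ ^ 2) (Icc 1 R) :=
    ((continuousOn_arcosh.mono Icc_subset_Ici_self).add (by fun_prop)).sub (by fun_prop)
  have hderiv : ∀ x ∈ Ioo 1 R, HasDerivAt (fun ρ ↦ arcosh ρ + ρ * √(ρ ^ 2 - 1) - ρ ^ 2)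
      (catExcessDensity x) x :=
    fun x hx ↦ hasDerivAt_arcosh_add_mul_sqrt_sub_sq hx.1
  have hint := intervalIntegral.intervalIntegrable_deriv_of_nonneg (uIcc_of_le hR ▸ hcont)
    (by simpa [hR] using hderiv) (by simpa [hR] using fun x hx _ ↦ catExcessDensity_nonneg hx)
  rw [intervalIntegral.integral_eq_sub_of_hasDerivAt_of_le hR hcont hderiv hint,
    catExcessIntegral]
  simp [arcosh_zero]
  ring

lemma catExcess_eq {R : ℝ} (hR : 1 ≤ R) :
    catExcess R = 4 / (π * R ^ 2) * catExcessIntegral R := by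
  rw [← integral_catExcessDensity hR]
  rfl

lemma mul_sqrt_sq_sub_one_sub_sq_add_one_mem_Icc {R : ℝ} (hR : 1 ≤ R) :
    R * √(R ^ 2 - 1) - R ^ 2 + 1 ∈ Icc 0 1 := by
  have hs : 0 ≤ √(R ^ 2 - 1) := sqrt_nonneg _
  have hsq : √(R ^ 2 - 1) ^ 2 = R ^ 2 - 1 := sq_sqrt (by nlinarith)
  have hle : √(R ^ 2 - 1) ≤ R := sqrt_le_iff.2 ⟨by linarith, by linarith⟩
  constructor <;> nlinarith [mul_nonneg hs (sub_nonneg.2 hle)]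

lemma arcosh_sub_log_mem_Icc {R : ℝ} (hR : 1 ≤ R) : arcosh R - log R ∈ Icc 0 (log 2) := by
  have hs : 0 ≤ √(R ^ 2 - 1) := sqrt_nonneg _
  have hle : √(R ^ 2 - 1) ≤ R := sqrt_le_iff.2 ⟨by linarith, by linarith⟩
  have hR0 : 0 < R := by linarith
  rw [arcosh, ← log_div (by positivity) hR0.ne', mem_Icc]
  exact ⟨log_nonneg ((one_le_div hR0).2 (by linarith)),
    log_le_log (by positivity) ((div_le_iff₀ hR0).2 (by linarith))⟩

lemma catExcessIntegral_pos {R : ℝ} (hR : 1 < R) : 0 < catExcessIntegral R :=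
  add_pos_of_pos_of_nonneg (arcosh_pos hR) (mul_sqrt_sq_sub_one_sub_sq_add_one_mem_Icc hR.le).1

lemma arcosh_isEquivalent_log : arcosh ~[atTop] log := by
  refine .of_isBigO_one_sub (.of_bound (log 2) ?_)
    (tendsto_norm_atTop_atTop.comp tendsto_log_atTop)
  filter_upwards [eventually_ge_atTop 1] with R hR
  obtain ⟨h₀, h₁⟩ := arcosh_sub_log_mem_Icc hR
  simpa [abs_of_nonneg h₀] using h₁

lemma catExcessIntegral_isEquivalent_log : catExcessIntegral ~[atTop] log := by
  refine .of_isBigO_one_sub (.of_bound (log 2 + 1) ?_)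
    (tendsto_norm_atTop_atTop.comp tendsto_log_atTop)
  filter_upwards [eventually_ge_atTop 1] with R hR
  obtain ⟨h₀, h₁⟩ := arcosh_sub_log_mem_Icc hR
  obtain ⟨h₂, h₃⟩ := mul_sqrt_sq_sub_one_sub_sq_add_one_mem_Icc hR
  simp only [Pi.sub_apply, catExcessIntegral, norm_one, mul_one, Real.norm_eq_abs]
  rw [abs_le]
  constructor <;> linarith

lemma neg_log_catExcess_isEquivalent :
    (fun R ↦ -log (catExcess R)) ~[atTop] (fun R ↦ 2 * log R) := by
  have hlog : Tendsto (fun R ↦ ‖2 * log R‖) atTop atTop :=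
    tendsto_norm_atTop_atTop.comp (tendsto_log_atTop.const_mul_atTop two_pos)
  have hsmall : (fun R ↦ log (catExcessIntegral R)) =o[atTop] (fun R ↦ 2 * log R) :=
    ((isLittleO_log_id_atTop.comp_tendsto
      (catExcessIntegral_isEquivalent_log.symm.tendsto_atTop tendsto_log_atTop)).trans_isBigO
      catExcessIntegral_isEquivalent_log.isBigO).const_mul_right' two_ne_zero.isUnit
  refine ((IsEquivalent.refl.sub_isLittleO hsmall).add_const_of_norm_tendsto_atTop
    (c := log π - log 4) hlog).congr_left ?_
  filter_upwards [eventually_gt_atTop 1] with R hR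
  have hI := catExcessIntegral_pos hR
  rw [catExcess_eq hR.le, log_mul (by positivity) hI.ne', log_div (by norm_num) (by positivity),
    log_mul pi_ne_zero (by positivity), log_pow]
  simp only [Pi.sub_apply, Nat.cast_ofNat]
  ring

lemma tendsto_height_sq_div_catExcess_mul_neg_log :
    Tendsto (fun R ↦ (2 * arcosh R / R) ^ 2 / (catExcess R * -log (catExcess R)))
      atTop (𝓝 (π / 2)) := by
  have hequiv : (fun R ↦ π * arcosh R ^ 2 / (catExcessIntegral R * -log (catExcess R))) ~[atTop]
      (fun R ↦ π * log R ^ 2 / (log R * (2 * log R))) :=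
    (IsEquivalent.refl.mul (arcosh_isEquivalent_log.pow 2)).div
      (catExcessIntegral_isEquivalent_log.mul neg_log_catExcess_isEquivalent)
  have hlimit : Tendsto (fun R ↦ π * log R ^ 2 / (log R * (2 * log R))) atTop (𝓝 (π / 2)) := by
    refine tendsto_const_nhds.congr' ?_
    filter_upwards [eventually_gt_atTop 1] with R hR
    have := (log_pos hR).ne'
    field_simp
  refine (hequiv.symm.tendsto_nhds hlimit).congr' ?_
  filter_upwards [eventually_gt_atTop 1] with R hR
  rw [catExcess_eq hR.le]
  field_simp
  ring

/-- There is a positive constant `d₂` such that the scale-invariant height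
`2·arcosh(R)/R = 2·log(R+√(R²−1))/R` of the catenoid divided by `√(E(R)·|log E(R)|)`
tends to `d₂` as `R → ∞`. -/
theorem catenoid_height_asymptotics :
    ∃ d₂ : ℝ, 0 < d₂ ∧
      Tendsto
        (fun R : ℝ =>
          (2 * Real.log (R + Real.sqrt (R ^ 2 - 1)) / R) /
            Real.sqrt (catExcess R * |Real.log (catExcess R)|))
        atTop (nhds d₂) := by
  refine ⟨√(π / 2), by positivity, ?_⟩
  refine ((continuous_sqrt.tendsto _).comp tendsto_height_sq_div_catExcess_mul_neg_log).congr' ?_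
  filter_upwards [eventually_ge_atTop 1, neg_log_catExcess_isEquivalent.eventually_pos
    ((eventually_gt_atTop 1).mono fun R hR ↦ mul_pos two_pos (log_pos hR))] with R hR hE
  have hH : 0 ≤ 2 * arcosh R / R := by have := arcosh_nonneg hR; positivity
  rw [Function.comp_apply, sqrt_div (sq_nonneg _), sqrt_sq hH, abs_of_neg (neg_pos.1 hE), arcosh]
end

section
/- Let A : ℝᵐ → ℝⁿ be a linear map with operator norm at most 1, let π₀ := ℝᵐ × {0} ⊆ ℝᵐ⁺ⁿ, and let T := {(x, Ax) : x ∈ ℝᵐ} ⊆ ℝᵐ⁺ⁿ be the graph plane of A. Then the orthogonal projections P_{π₀} and P_T of ℝᵐ⁺ⁿ onto π₀ and T satisfy 2‖P_{π₀} − P_T‖² ≥ ‖A‖², where ‖·‖ denotes the Hilbert–Schmidt norm (on endomorphisms of ℝᵐ⁺ⁿ on the left and on linear maps ℝᵐ → ℝⁿ on the right). -/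
open Matrix

/-- The horizontal plane `π₀ = ℝᵐ × {0} ⊆ ℝᵐ⁺ⁿ`, as the span of the first `m`
standard basis vectors. -/
noncomputable def horizPlane (m n : ℕ) : Submodule ℝ (EuclideanSpace ℝ (Fin (m + n))) :=
  Submodule.span ℝ
    (Set.range fun i : Fin m => EuclideanSpace.single (Fin.castAdd n i) (1 : ℝ))

/-- The graph plane `T = {(x, Ax) : x ∈ ℝᵐ} ⊆ ℝᵐ⁺ⁿ` of a linear map `A : ℝᵐ → ℝⁿ`
given by a matrix, as the span of the graphs of the standard basis vectors. -/
noncomputable def graphPlane (m n : ℕ) (A : Matrix (Fin n) (Fin m) ℝ) :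
    Submodule ℝ (EuclideanSpace ℝ (Fin (m + n))) :=
  Submodule.span ℝ
    (Set.range fun i : Fin m =>
      EuclideanSpace.single (Fin.castAdd n i) (1 : ℝ) +
        ∑ j : Fin n, A j i • EuclideanSpace.single (Fin.natAdd m j) (1 : ℝ))

/-- The orthogonal projection of `ℝᵐ⁺ⁿ` onto a subspace `K`, as an endomorphism. -/
noncomputable def projOnto {m n : ℕ} (K : Submodule ℝ (EuclideanSpace ℝ (Fin (m + n)))) :
    EuclideanSpace ℝ (Fin (m + n)) →L[ℝ] EuclideanSpace ℝ (Fin (m + n)) :=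
  K.subtypeL.comp K.orthogonalProjectionOnto

/-! For a vertical basis vector `e = e_{m+j}` we have `P_{π₀} e = 0`, so its column contributes
`‖P_T e‖²`. Test `P_T e` against the graph vector `u = (a, A a) ∈ T` of the `j`-th row `a` of `A`:
`⟪e, u⟫ = (A a)_j = |a|²`, while `‖u‖² = |a|² + |A a|² ≤ 2|a|²` since `A` is a contraction. Hence
`|a|² = ⟪P_T e, u⟫ ≤ ‖P_T e‖ ‖u‖ ≤ √2 ‖P_T e‖ |a|`, i.e. `|a|² ≤ 2‖P_T e‖²`. Summing over `j` gives
the claim; the horizontal columns only add nonnegative terms. -/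

open RealInnerProductSpace

lemma Submodule.inner_le_norm_starProjection_mul_norm {E : Type*} [NormedAddCommGroup E]
    [InnerProductSpace ℝ E] (K : Submodule ℝ E) [K.HasOrthogonalProjection] (v : E) {u : E}
    (hu : u ∈ K) : ⟪v, u⟫ ≤ ‖K.starProjection v‖ * ‖u‖ := by
  rw [← K.starProjection_eq_self_iff.mpr hu, ← K.inner_starProjection_left_eq_right,
    K.starProjection_eq_self_iff.mpr hu]
  exact real_inner_le_norm _ _

lemma le_two_mul_sq_of_le_mul_of_sq_le {a b c : ℝ} (hab : a ≤ b * c) (hc : c ^ 2 ≤ 2 * a) :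
    a ≤ 2 * b ^ 2 := by
  rcases le_or_gt a 0 with ha | ha
  · nlinarith
  · have : a ^ 2 ≤ 2 * a * b ^ 2 := by nlinarith [pow_le_pow_left₀ ha.le hab 2]
    nlinarith

section GraphPlane

variable {m n : ℕ}

lemma castAdd_ne_natAdd (i : Fin m) (j : Fin n) : Fin.castAdd n i ≠ Fin.natAdd m j := by
  simp [Fin.ext_iff]; omega

noncomputable def graphVec (A : Matrix (Fin n) (Fin m) ℝ) (x : EuclideanSpace ℝ (Fin m)) :
    EuclideanSpace ℝ (Fin (m + n)) :=
  WithLp.toLp 2 (Fin.append x (A *ᵥ x))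

@[simp] lemma graphVec_castAdd (A : Matrix (Fin n) (Fin m) ℝ) (x : EuclideanSpace ℝ (Fin m))
    (i : Fin m) : graphVec A x (Fin.castAdd n i) = x i := by
  simp [graphVec]

@[simp] lemma graphVec_natAdd (A : Matrix (Fin n) (Fin m) ℝ) (x : EuclideanSpace ℝ (Fin m))
    (j : Fin n) : graphVec A x (Fin.natAdd m j) = (A *ᵥ x) j := by
  simp [graphVec]

lemma graphVec_eq_sum (A : Matrix (Fin n) (Fin m) ℝ) (x : EuclideanSpace ℝ (Fin m)) :
    graphVec A x = ∑ i, x i • (EuclideanSpace.single (Fin.castAdd n i) (1 : ℝ) +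
        ∑ j : Fin n, A j i • EuclideanSpace.single (Fin.natAdd m j) (1 : ℝ)) := by
  ext k
  refine Fin.addCases (fun i => ?_) (fun j => ?_) k
  · simp [Pi.single_apply, castAdd_ne_natAdd]
  · simp [Pi.single_apply, (castAdd_ne_natAdd _ _).symm, Matrix.mulVec, dotProduct, mul_comm]

lemma graphVec_mem_graphPlane (A : Matrix (Fin n) (Fin m) ℝ) (x : EuclideanSpace ℝ (Fin m)) :
    graphVec A x ∈ graphPlane m n A := by
  rw [graphVec_eq_sum]
  exact Submodule.sum_mem _ fun i _ => Submodule.smul_mem _ _ (Submodule.subset_span ⟨i, rfl⟩)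

lemma norm_graphVec_sq (A : Matrix (Fin n) (Fin m) ℝ) (x : EuclideanSpace ℝ (Fin m)) :
    ‖graphVec A x‖ ^ 2 = ‖x‖ ^ 2 + ‖Matrix.toEuclideanLin A x‖ ^ 2 := by
  simp [EuclideanSpace.norm_sq_eq, Fin.sum_univ_add, Matrix.toLpLin_apply]

lemma inner_single_natAdd_graphVec (A : Matrix (Fin n) (Fin m) ℝ) (x : EuclideanSpace ℝ (Fin m))
    (j : Fin n) :
    ⟪EuclideanSpace.single (Fin.natAdd m j) (1 : ℝ), graphVec A x⟫ = (A *ᵥ x) j := by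
  simp [EuclideanSpace.inner_single_left]

lemma projOnto_eq_starProjection (K : Submodule ℝ (EuclideanSpace ℝ (Fin (m + n)))) :
    projOnto K = K.starProjection :=
  rfl

lemma projOnto_horizPlane_single_natAdd (j : Fin n) :
    projOnto (horizPlane m n) (EuclideanSpace.single (Fin.natAdd m j) (1 : ℝ)) = 0 := by
  rw [projOnto_eq_starProjection, Submodule.starProjection_apply_eq_zero_iff,
    ← Submodule.span_singleton_le_iff_mem, ← Submodule.isOrtho_iff_le, horizPlane,
    Submodule.isOrtho_span]
  simp [EuclideanSpace.inner_single_left, (castAdd_ne_natAdd _ _).symm]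

lemma sum_sq_le_two_mul_norm_projOnto_graphPlane_sq (A : Matrix (Fin n) (Fin m) ℝ)
    (hA : ∀ x : EuclideanSpace ℝ (Fin m), ‖Matrix.toEuclideanLin A x‖ ≤ ‖x‖) (j : Fin n) :
    ∑ i, A j i ^ 2 ≤
      2 * ‖projOnto (graphPlane m n A) (EuclideanSpace.single (Fin.natAdd m j) 1)‖ ^ 2 := by
  set x : EuclideanSpace ℝ (Fin m) := WithLp.toLp 2 (A j)
  have hx : ‖x‖ ^ 2 = ∑ i, A j i ^ 2 := by simp [x, EuclideanSpace.norm_sq_eq]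
  have hinner : ⟪EuclideanSpace.single (Fin.natAdd m j) 1, graphVec A x⟫ = ‖x‖ ^ 2 := by
    simp [inner_single_natAdd_graphVec, hx, x, Matrix.mulVec, dotProduct, sq]
  have hnorm : ‖graphVec A x‖ ^ 2 ≤ 2 * ‖x‖ ^ 2 := by
    rw [norm_graphVec_sq]
    linarith [pow_le_pow_left₀ (norm_nonneg _) (hA x) 2]
  rw [← hx]
  refine le_two_mul_sq_of_le_mul_of_sq_le ?_ hnorm
  rw [← hinner, projOnto_eq_starProjection]
  exact Submodule.inner_le_norm_starProjection_mul_norm _ _ (graphVec_mem_graphPlane A x)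

end GraphPlane

/-- If `A : ℝᵐ → ℝⁿ` has operator norm at most `1`, `π₀ = ℝᵐ × {0}` and `T` is the graph
plane of `A`, then `2‖P_{π₀} − P_T‖² ≥ ‖A‖²`, where the norms are Hilbert–Schmidt norms
(computed via the standard orthonormal basis on the left, and entrywise on the right). -/
theorem tilt_controls_gradient (m n : ℕ) (A : Matrix (Fin n) (Fin m) ℝ)
    (hA : ∀ x : EuclideanSpace ℝ (Fin m), ‖Matrix.toEuclideanLin A x‖ ≤ ‖x‖) :
    2 * ∑ k : Fin (m + n),
        ‖projOnto (horizPlane m n) (EuclideanSpace.single k 1) -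
          projOnto (graphPlane m n A) (EuclideanSpace.single k 1)‖ ^ 2 ≥
      ∑ j, ∑ i, A j i ^ 2 := by
  set F : Fin (m + n) → ℝ := fun k =>
    ‖projOnto (horizPlane m n) (EuclideanSpace.single k 1) -
      projOnto (graphPlane m n A) (EuclideanSpace.single k 1)‖ ^ 2
  have hrow (j : Fin n) : ∑ i, A j i ^ 2 ≤ 2 * F (Fin.natAdd m j) := by
    simp only [F, projOnto_horizPlane_single_natAdd, zero_sub, norm_neg]
    exact sum_sq_le_two_mul_norm_projOnto_graphPlane_sq A hA j
  calc ∑ j, ∑ i, A j i ^ 2 ≤ 2 * ∑ j, F (Fin.natAdd m j) := by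
        rw [Finset.mul_sum]; exact Finset.sum_le_sum fun j _ => hrow j
    _ ≤ 2 * ∑ k, F k := by
        rw [Fin.sum_univ_add]
        gcongr
        exact le_add_of_nonneg_left (Finset.sum_nonneg fun i _ => by positivity)
end
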